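/- arXiv:2604.08891 — 2 statements merged into one kernel-verified Lean document; each statement's English description precedes it below -/
import Mathlib

section
/- Fix p ∈ ℕ. For any constant μ₀ ∈ ℝ, any strictly positive definite matrix S₀ ∈ ℝ^{p×p}, and any α > √p·‖S₀‖₂ + μ₀, there exists a constant C₀ > 0 (depending only on p, μ₀, S₀, α) such that for all m ∈ ℝ^p with ‖m‖₂ ≤ μ₀ and all covariance matrices S with 0 ≺ S ⪯ S₀, the probability under z ~ N(m, S) that ‖z‖_∞ < α is greater than C₀. -/
open MeasureTheory ProbabilityTheory

noncomputable def stdGaussian (p : ℕ) : Measure (Fin p → ℝ) :=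
  Measure.pi fun _ => gaussianReal 0 1

noncomputable def multivariateGaussian {p : ℕ} (m : EuclideanSpace ℝ (Fin p))
    (S : Matrix (Fin p) (Fin p) ℝ) (hS : S.PosSemidef) :
    Measure (EuclideanSpace ℝ (Fin p)) :=
  (stdGaussian p).map fun z =>
    m + (EuclideanSpace.equiv (Fin p) ℝ).symm (((hS.1.eigenvectorUnitary : Matrix (Fin p) (Fin p) ℝ) *
      Matrix.diagonal (fun i => Real.sqrt (hS.1.eigenvalues i)) *
      (star hS.1.eigenvectorUnitary : Matrix (Fin p) (Fin p) ℝ)).mulVec z)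

noncomputable def matSpectralNorm {p : ℕ} (S : Matrix (Fin p) (Fin p) ℝ) : ℝ :=
  ‖LinearMap.toContinuousLinearMap (Matrix.toEuclideanLin S)‖

noncomputable def supNorm {p : ℕ} (z : EuclideanSpace ℝ (Fin p)) : ℝ :=
  ‖(EuclideanSpace.equiv (Fin p) ℝ z : Fin p → ℝ)‖

section AuxStmt0
open InnerProductSpace Matrix

noncomputable abbrev sqM {p : ℕ} {S : Matrix (Fin p) (Fin p) ℝ} (hS : S.PosSemidef) :
    Matrix (Fin p) (Fin p) ℝ :=
  (hS.1.eigenvectorUnitary : Matrix (Fin p) (Fin p) ℝ) *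
      Matrix.diagonal (fun i => Real.sqrt (hS.1.eigenvalues i)) *
      (star hS.1.eigenvectorUnitary : Matrix (Fin p) (Fin p) ℝ)

lemma sqM_transpose {p : ℕ} {S : Matrix (Fin p) (Fin p) ℝ} (hS : S.PosSemidef) :
    (sqM hS)ᵀ = sqM hS := by
  have hs : (star hS.1.eigenvectorUnitary : Matrix (Fin p) (Fin p) ℝ) =
      (hS.1.eigenvectorUnitary : Matrix (Fin p) (Fin p) ℝ)ᵀ := by
    rw [Matrix.star_eq_conjTranspose, Matrix.conjTranspose_eq_transpose_of_trivial]
  unfold sqM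
  rw [hs, Matrix.transpose_mul, Matrix.transpose_mul, Matrix.transpose_transpose,
    Matrix.diagonal_transpose, Matrix.mul_assoc]

lemma sqM_mul_self {p : ℕ} {S : Matrix (Fin p) (Fin p) ℝ} (hS : S.PosSemidef) :
    sqM hS * sqM hS = S := by
  unfold sqM
  set U := (hS.1.eigenvectorUnitary : Matrix (Fin p) (Fin p) ℝ) with hUd
  set sU := (star hS.1.eigenvectorUnitary : Matrix (Fin p) (Fin p) ℝ) with hsU
  set D := Matrix.diagonal (fun i => Real.sqrt (hS.1.eigenvalues i)) with hD
  have hU : sU * U = 1 := Unitary.coe_star_mul_self _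
  have e : U * D * sU * (U * D * sU) = U * (D * D) * sU := by
    calc _ = U * D * (sU * U) * D * sU := by simp only [Matrix.mul_assoc]
    _ = _ := by rw [hU, Matrix.mul_one]; simp only [Matrix.mul_assoc]
  have hd : (fun i => Real.sqrt (hS.1.eigenvalues i) * Real.sqrt (hS.1.eigenvalues i)) =
      hS.1.eigenvalues := funext fun i => Real.mul_self_sqrt (hS.eigenvalues_nonneg i)
  rw [e, hD, diagonal_mul_diagonal, hd]
  conv_rhs => rw [hS.1.spectral_theorem, Unitary.conjStarAlgAut_apply]
  rfl

-- aux 1: quadratic form bounded by operator norm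
lemma aux_dot {p : ℕ} (S₀ : Matrix (Fin p) (Fin p) ℝ) (z : Fin p → ℝ) :
    z ⬝ᵥ S₀.mulVec z ≤ matSpectralNorm S₀ * (z ⬝ᵥ z) := by
  set x : EuclideanSpace ℝ (Fin p) := (WithLp.equiv 2 (Fin p → ℝ)).symm z with hx
  set T := LinearMap.toContinuousLinearMap (Matrix.toEuclideanLin S₀) with hT
  have h1 : z ⬝ᵥ S₀.mulVec z = ⟪x, T x⟫_ℝ := by
    simp [hT, hx, Matrix.toEuclideanLin_apply, PiLp.inner_apply, RCLike.inner_apply,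
      dotProduct, mul_comm]
  have h2 : ⟪x, T x⟫_ℝ ≤ ‖x‖ * ‖T x‖ := real_inner_le_norm x (T x)
  have h3 : ‖T x‖ ≤ ‖T‖ * ‖x‖ := T.le_opNorm x
  have h4 : ‖x‖ ^ 2 = z ⬝ᵥ z := by
    rw [EuclideanSpace.norm_eq, Real.sq_sqrt (by positivity)]
    simp [hx, dotProduct, Real.norm_eq_abs, sq_abs, pow_two]
  have h5 : ‖x‖ * ‖T x‖ ≤ ‖T‖ * ‖x‖ ^ 2 := by nlinarith [norm_nonneg x, norm_nonneg (T x)]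
  rw [h1, ← h4]
  exact h2.trans h5

lemma aux_supNorm_le {p : ℕ} (x : EuclideanSpace ℝ (Fin p)) : supNorm x ≤ ‖x‖ := by
  unfold supNorm
  rw [pi_norm_le_iff_of_nonneg (norm_nonneg x)]
  intro i
  have h : ‖(EuclideanSpace.equiv (Fin p) ℝ) x i‖ ^ 2 ≤ ‖x‖ ^ 2 := by
    rw [EuclideanSpace.norm_eq, Real.sq_sqrt (by positivity)]
    exact Finset.single_le_sum (f := fun j => ‖(EuclideanSpace.equiv (Fin p) ℝ) x j‖ ^ 2)
      (fun j _ => by positivity) (Finset.mem_univ i)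
  nlinarith [norm_nonneg ((EuclideanSpace.equiv (Fin p) ℝ) x i), norm_nonneg x]

lemma aux_key {p : ℕ} {μ₀ α : ℝ} {S₀ : Matrix (Fin p) (Fin p) ℝ}
    (hα : Real.sqrt p * matSpectralNorm S₀ + μ₀ < α)
    (m : EuclideanSpace ℝ (Fin p)) (hm : ‖m‖ ≤ μ₀)
    (S : Matrix (Fin p) (Fin p) ℝ) (hS : S.PosSemidef) (hle : (S₀ - S).PosSemidef)
    (z : Fin p → ℝ) (hz : ∀ i, |z i| ≤ Real.sqrt (matSpectralNorm S₀)) :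
    supNorm (m + (EuclideanSpace.equiv (Fin p) ℝ).symm ((sqM hS).mulVec z)) < α := by
  set Q := sqM hS with hQ
  set w := Q.mulVec z with hw
  have hQt : Qᵀ = Q := by
    exact sqM_transpose hS
  have h1 : w ⬝ᵥ w = z ⬝ᵥ S.mulVec z := by
    conv_rhs => rw [← sqM_mul_self hS, ← Matrix.mulVec_mulVec, dotProduct_mulVec,
      ← Matrix.mulVec_transpose, hQt]
  have h2 : z ⬝ᵥ S.mulVec z ≤ z ⬝ᵥ S₀.mulVec z := by
    have h0 := hle.dotProduct_mulVec_nonneg z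
    simp only [star_trivial, Matrix.sub_mulVec, dotProduct_sub] at h0
    linarith
  have hnorm0 : (0:ℝ) ≤ matSpectralNorm S₀ := norm_nonneg _
  have h4 : z ⬝ᵥ z ≤ p * matSpectralNorm S₀ := by
    have : z ⬝ᵥ z ≤ ∑ _i : Fin p, matSpectralNorm S₀ := by
      rw [dotProduct]
      refine Finset.sum_le_sum fun i _ => ?_
      have := hz i
      nlinarith [Real.sq_sqrt hnorm0, abs_nonneg (z i), sq_abs (z i)]
    simpa using this
  have h5 : w ⬝ᵥ w ≤ p * matSpectralNorm S₀ ^ 2 := by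
    have := aux_dot S₀ z
    have hd := h1.trans_le (h2.trans this)
    nlinarith
  have hwn : ‖(EuclideanSpace.equiv (Fin p) ℝ).symm w‖ ≤ Real.sqrt p * matSpectralNorm S₀ := by
    have heq : ‖(EuclideanSpace.equiv (Fin p) ℝ).symm w‖ = Real.sqrt (w ⬝ᵥ w) := by
      rw [EuclideanSpace.norm_eq]
      congr 1
      simp [dotProduct, Real.norm_eq_abs, sq_abs, pow_two]
    rw [heq]
    calc Real.sqrt (w ⬝ᵥ w) ≤ Real.sqrt (p * matSpectralNorm S₀ ^ 2) := Real.sqrt_le_sqrt h5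
    _ = Real.sqrt p * matSpectralNorm S₀ := by
        rw [Real.sqrt_mul (Nat.cast_nonneg p), Real.sqrt_sq hnorm0]
  calc supNorm (m + (EuclideanSpace.equiv (Fin p) ℝ).symm w)
      ≤ ‖m + (EuclideanSpace.equiv (Fin p) ℝ).symm w‖ := aux_supNorm_le _
    _ ≤ ‖m‖ + ‖(EuclideanSpace.equiv (Fin p) ℝ).symm w‖ := norm_add_le _ _
    _ ≤ μ₀ + Real.sqrt p * matSpectralNorm S₀ := add_le_add hm hwn
    _ < α := by linarith

lemma aux_spec_pos {p : ℕ} (hp : 0 < p) {S₀ : Matrix (Fin p) (Fin p) ℝ} (hS₀ : S₀.PosDef) :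
    0 < matSpectralNorm S₀ := by
  rw [matSpectralNorm, norm_pos_iff]
  intro h
  have hS0 : S₀ = 0 := by
    have h1 : Matrix.toEuclideanLin S₀ = 0 :=
      LinearMap.toContinuousLinearMap.injective (h.trans (map_zero _).symm)
    simpa using Matrix.toEuclideanLin.injective (h1.trans (map_zero Matrix.toEuclideanLin).symm)
  have : (fun _ : Fin p => (1:ℝ)) ≠ 0 := by
    intro hc
    have := congrFun hc ⟨0, hp⟩
    norm_num at this
  have := hS₀.dotProduct_mulVec_pos this
  rw [hS0] at this
  simp at this

instance stdGaussian_prob (p : ℕ) : IsProbabilityMeasure (stdGaussian p) := by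
  unfold _root_.stdGaussian; infer_instance

lemma aux_gauss_pos {b : ℝ} (hb : 0 < b) : 0 < gaussianReal 0 1 (Set.Icc (-b) b) := by
  by_contra h
  push_neg at h
  have h0 : gaussianReal 0 1 (Set.Icc (-b) b) = 0 := le_antisymm h zero_le
  have := gaussianReal_absolutelyContinuous' 0 (by norm_num : (1:NNReal) ≠ 0) h0
  rw [Real.volume_Icc] at this
  simp only [ENNReal.ofReal_eq_zero] at this
  linarith


/-- uniform lower bound on the Gaussian probability that the sup-norm is
below `α > √p ‖S₀‖₂ + μ₀`, over all means with `‖m‖₂ ≤ μ₀` and covariances `0 ≺ S ⪯ S₀`. -/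
theorem stmt_0 (p : ℕ) (μ₀ : ℝ) (S₀ : Matrix (Fin p) (Fin p) ℝ) (hS₀ : S₀.PosDef)
    (α : ℝ) (hα : Real.sqrt p * matSpectralNorm S₀ + μ₀ < α) :
    ∃ C₀ : ℝ, 0 < C₀ ∧
      ∀ (m : EuclideanSpace ℝ (Fin p)), ‖m‖ ≤ μ₀ →
      ∀ (S : Matrix (Fin p) (Fin p) ℝ) (hS : S.PosDef), (S₀ - S).PosSemidef →
        ENNReal.ofReal C₀ <
          multivariateGaussian m S hS.posSemidef {z | supNorm z < α} := by
  set b := Real.sqrt (matSpectralNorm S₀) with hb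
  set A : Set (Fin p → ℝ) := Set.univ.pi (fun _ => Set.Icc (-b) b) with hA
  have hApi : stdGaussian p A = ∏ _i : Fin p, gaussianReal 0 1 (Set.Icc (-b) b) := by
    rw [_root_.stdGaussian, hA, Measure.pi_pi]
  have hpos : 0 < stdGaussian p A := by
    rw [hApi]
    rcases Nat.eq_zero_or_pos p with hp | hp
    · subst hp; simp
    · have hbpos : 0 < b := Real.sqrt_pos.mpr (aux_spec_pos hp hS₀)
      exact CanonicallyOrderedAdd.prod_pos.mpr fun i _ => aux_gauss_pos hbpos
  have hfin : stdGaussian p A ≠ ⊤ := (measure_lt_top _ _).ne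
  have htR : 0 < (stdGaussian p A).toReal := ENNReal.toReal_pos hpos.ne' hfin
  refine ⟨(stdGaussian p A).toReal / 2, by linarith, ?_⟩
  intro m hm S hS hle
  have hc : Continuous fun z : Fin p → ℝ => (sqM hS.posSemidef).mulVec z := by
    have h := LinearMap.continuous_of_finiteDimensional
      (Matrix.mulVecLin (sqM hS.posSemidef))
    exact h
  have hmeas_f : Measurable (fun z : Fin p → ℝ =>
      m + (EuclideanSpace.equiv (Fin p) ℝ).symm ((sqM hS.posSemidef).mulVec z)) :=
    (continuous_const.add
      ((EuclideanSpace.equiv (Fin p) ℝ).symm.continuous.comp hc)).measurable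
  have hset : MeasurableSet {z : EuclideanSpace ℝ (Fin p) | supNorm z < α} := by
    have hcont : Continuous fun z : EuclideanSpace ℝ (Fin p) => supNorm z :=
      continuous_norm.comp (EuclideanSpace.equiv (Fin p) ℝ).continuous
    exact (isOpen_lt hcont continuous_const).measurableSet
  rw [_root_.multivariateGaussian, Measure.map_apply hmeas_f hset]
  have hsub : A ⊆ (fun z : Fin p → ℝ =>
      m + (EuclideanSpace.equiv (Fin p) ℝ).symm ((sqM hS.posSemidef).mulVec z)) ⁻¹'
      {z | supNorm z < α} := by
    intro z hz
    simp only [Set.mem_preimage, Set.mem_setOf_eq]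
    refine aux_key hα m hm S hS.posSemidef hle z fun i => ?_
    have h := hz i (Set.mem_univ i)
    rw [abs_le]
    exact ⟨h.1, h.2⟩
  calc ENNReal.ofReal ((stdGaussian p A).toReal / 2) < stdGaussian p A := by
        conv_rhs => rw [← ENNReal.ofReal_toReal hfin]
        exact ENNReal.ofReal_lt_ofReal_iff htR |>.mpr (by linarith)
    _ ≤ _ := measure_mono hsub

end AuxStmt0
end

section
/- Let K be a symmetric positive definite n×n real matrix and D a diagonal matrix with strictly positive diagonal entries. Then for every y ∈ ℝⁿ, yᵀ (K+D)^{-1} K (K+D)^{-1} y ≤ yᵀ K^{-1} y. -/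
open Matrix

/-- for `K ≻ 0` symmetric and `D` diagonal with positive entries,
`yᵀ(K+D)⁻¹K(K+D)⁻¹y ≤ yᵀK⁻¹y`. -/
theorem stmt_7 (n : ℕ) (K : Matrix (Fin n) (Fin n) ℝ) (hK : K.PosDef)
    (dvec : Fin n → ℝ) (hd : ∀ i, 0 < dvec i) (y : Fin n → ℝ) :
    y ⬝ᵥ ((K + Matrix.diagonal dvec)⁻¹ *ᵥ K *ᵥ (K + Matrix.diagonal dvec)⁻¹ *ᵥ y) ≤
      y ⬝ᵥ (K⁻¹ *ᵥ y) := by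
  set S := Matrix.diagonal dvec with hS
  set A := K + S with hAdef
  have hSpsd : S.PosSemidef := Matrix.posSemidef_diagonal_iff.mpr fun i => (hd i).le
  have hA : A.PosDef := hK.add_posSemidef hSpsd
  letI := hA.isUnit.invertible
  letI := hK.isUnit.invertible
  have hAM : A * A⁻¹ = 1 := Matrix.mul_inv_of_invertible A
  have hMA : A⁻¹ * A = 1 := Matrix.inv_mul_of_invertible A
  have hKK : K * K⁻¹ = 1 := Matrix.mul_inv_of_invertible K
  have hKK' : K⁻¹ * K = 1 := Matrix.inv_mul_of_invertible K
  set P := S + S + S * K⁻¹ * S with hPdef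
  have hPpsd : P.PosSemidef := by
    refine (hSpsd.add hSpsd).add ?_
    have := hK.inv.posSemidef.conjTranspose_mul_mul_same S
    rwa [hSpsd.1.eq] at this
  have heq : K⁻¹ - A⁻¹ * K * A⁻¹ = A⁻¹ * P * A⁻¹ := by
    have h1 : A * K⁻¹ * A = K + P := by
      rw [hAdef, hPdef, add_mul, add_mul, mul_add, mul_add, hKK,
        Matrix.mul_assoc S K⁻¹ K, hKK', one_mul, one_mul, mul_one]
      abel
    have h2 : A⁻¹ * (A * K⁻¹ * A) * A⁻¹ = K⁻¹ := by
      rw [Matrix.mul_assoc, Matrix.mul_assoc, Matrix.mul_assoc, hAM, mul_one,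
        ← Matrix.mul_assoc, hMA, one_mul]
    rw [← h2, h1, mul_add, add_mul]
    abel
  have hdiff : (K⁻¹ - A⁻¹ * K * A⁻¹).PosSemidef := by
    rw [heq]
    have := hPpsd.mul_mul_conjTranspose_same A⁻¹
    rwa [(hA.isHermitian.inv).eq] at this
  have h := hdiff.dotProduct_mulVec_nonneg y
  simp only [star_trivial, sub_mulVec, dotProduct_sub, Matrix.mul_assoc,
    ← Matrix.mulVec_mulVec] at h ⊢
  linarith
end
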